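/- Fix h > 0 and a random variable X with E(0∨X) < ∞. Then the Winsorised-tilted mean E_{h,w}X := E[X e^{h(X∧w)}]/E[e^{h(X∧w)}] is nondecreasing in w ∈ ℝ. -/

import Mathlib

/-!
Write `f_w = exp (h * min X w)`. For `w₁ ≤ w₂` the ratio
`f_{w₂} / f_{w₁} = exp (h * (min X w₂ - min X w₁))` is a nondecreasing function of `X`, so on two
independent copies `(X, X')` of `X`, `(X - X') * (f_{w₂}(X) f_{w₁}(X') - f_{w₁}(X) f_{w₂}(X')) ≥ 0`.
Integrating over the product measure and expanding gives
`E[X f_{w₁}] E[f_{w₂}] ≤ E[X f_{w₂}] E[f_{w₁}]`, which is the claim since `E[f_w] > 0`.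
The moment condition makes `X f_w` integrable: `f_w ≤ exp (h w)`, and on `X ≤ 0` the factor
`exp (h X)` tames `|X|`.
-/

open MeasureTheory Real

lemma integral_mul_mul_integral_le_of_sub_mul_sub_nonneg {Ω : Type*} [MeasurableSpace Ω]
    {μ : Measure Ω} [SFinite μ] {X f g : Ω → ℝ} (hf : Integrable f μ) (hg : Integrable g μ)
    (hXf : Integrable (fun ω => X ω * f ω) μ) (hXg : Integrable (fun ω => X ω * g ω) μ)
    (H : ∀ a b, 0 ≤ (X a - X b) * (g a * f b - f a * g b)) :
    (∫ ω, X ω * f ω ∂μ) * (∫ ω, g ω ∂μ) ≤ (∫ ω, X ω * g ω ∂μ) * (∫ ω, f ω ∂μ) := by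
  have hnonneg : 0 ≤ ∫ z, (X z.1 - X z.2) * (g z.1 * f z.2 - f z.1 * g z.2) ∂μ.prod μ :=
    integral_nonneg fun z => H z.1 z.2
  have hexpand : (fun z : Ω × Ω => (X z.1 - X z.2) * (g z.1 * f z.2 - f z.1 * g z.2)) =
      fun z => X z.1 * g z.1 * f z.2 - X z.1 * f z.1 * g z.2
        - (g z.1 * (X z.2 * f z.2) - f z.1 * (X z.2 * g z.2)) := by
    funext z; ring
  have h₁ : Integrable (fun z : Ω × Ω => X z.1 * g z.1 * f z.2) (μ.prod μ) := hXg.mul_prod hf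
  have h₂ : Integrable (fun z : Ω × Ω => X z.1 * f z.1 * g z.2) (μ.prod μ) := hXf.mul_prod hg
  have h₃ : Integrable (fun z : Ω × Ω => g z.1 * (X z.2 * f z.2)) (μ.prod μ) := hg.mul_prod hXf
  have h₄ : Integrable (fun z : Ω × Ω => f z.1 * (X z.2 * g z.2)) (μ.prod μ) := hf.mul_prod hXg
  rw [hexpand, integral_sub, integral_sub h₁ h₂, integral_sub h₃ h₄,
    integral_prod_mul (fun ω => X ω * g ω) f, integral_prod_mul (fun ω => X ω * f ω) g,
    integral_prod_mul g (fun ω => X ω * f ω), integral_prod_mul f (fun ω => X ω * g ω)] at hnonneg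
  · linarith
  exacts [h₁.sub h₂, h₃.sub h₄]

lemma monotone_min_sub_min {w₁ w₂ : ℝ} (hw : w₁ ≤ w₂) :
    Monotone fun x : ℝ => min x w₂ - min x w₁ := by
  intro a b hab
  simp only [min_def]
  split_ifs <;> linarith

lemma sub_mul_exp_mul_min_sub_nonneg {h w₁ w₂ : ℝ} (hh : 0 ≤ h) (hw : w₁ ≤ w₂) (a b : ℝ) :
    0 ≤ (a - b) * (exp (h * min a w₂) * exp (h * min b w₁)
      - exp (h * min a w₁) * exp (h * min b w₂)) := by
  set r : ℝ → ℝ := fun x => exp (h * (min x w₂ - min x w₁))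
  have hr : Monotone r := fun x y hxy =>
    exp_le_exp.mpr (mul_le_mul_of_nonneg_left (monotone_min_sub_min hw hxy) hh)
  have hfactor : exp (h * min a w₂) * exp (h * min b w₁) - exp (h * min a w₁) * exp (h * min b w₂)
      = exp (h * min a w₁) * exp (h * min b w₁) * (r a - r b) := by
    simp only [r, mul_sub, ← exp_add]
    ring_nf
  rw [hfactor, mul_left_comm, mul_comm (a - b)]
  exact mul_nonneg (by positivity) ((hr.monovary monotone_id).sub_mul_sub_nonneg b a)

lemma abs_mul_exp_mul_min_le {h : ℝ} (hh : 0 < h) (x w : ℝ) :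
    |x| * exp (h * min x w) ≤ max 0 x * exp (h * w) + exp (-1) / h := by
  rcases le_total 0 x with hx | hx
  · have hmono : x * exp (h * min x w) ≤ x * exp (h * w) := by
      gcongr
      exact min_le_right _ _
    have : 0 ≤ exp (-1) / h := by positivity
    rw [abs_of_nonneg hx, max_eq_right hx]
    linarith
  · rw [abs_of_nonpos hx, max_eq_left hx, zero_mul, zero_add, le_div_iff₀ hh]
    calc -x * exp (h * min x w) * h ≤ -x * exp (h * x) * h := by
          gcongr
          · linarith
          · exact min_le_left _ _
      _ = -(h * x) * exp (-(-(h * x))) := by rw [neg_neg]; ring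
      _ ≤ exp (-1) := mul_exp_neg_le_exp_neg_one _

section Integrability

variable {Ω : Type*} [MeasurableSpace Ω] {μ : Measure Ω} [IsFiniteMeasure μ] {X : Ω → ℝ}
  {h : ℝ}

lemma integrable_exp_mul_min (hX : AEMeasurable X μ) (hh : 0 ≤ h) (w : ℝ) :
    Integrable (fun ω => exp (h * min (X ω) w)) μ := by
  refine Integrable.mono' (integrable_const (exp (h * w)))
    ((hX.min aemeasurable_const).const_mul h).exp.aestronglyMeasurable ?_
  filter_upwards with ω
  rw [norm_of_nonneg (exp_pos _).le]
  gcongr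
  exact min_le_right _ _

lemma integrable_mul_exp_mul_min (hX : AEMeasurable X μ)
    (hint : Integrable (fun ω => max 0 (X ω)) μ) (hh : 0 < h) (w : ℝ) :
    Integrable (fun ω => X ω * exp (h * min (X ω) w)) μ := by
  refine Integrable.mono' ((hint.mul_const (exp (h * w))).add (integrable_const (exp (-1) / h)))
    (hX.mul ((hX.min aemeasurable_const).const_mul h).exp).aestronglyMeasurable ?_
  filter_upwards with ω
  rw [norm_mul, norm_of_nonneg (exp_pos _).le, Real.norm_eq_abs]
  exact abs_mul_exp_mul_min_le hh (X ω) w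

end Integrability

theorem stmt_11 {Ω : Type*} [MeasurableSpace Ω] (μ : Measure Ω) [IsProbabilityMeasure μ]
    (h : ℝ) (hh : 0 < h) (X : Ω → ℝ) (hX : Measurable X)
    (hint : Integrable (fun ω => max 0 (X ω)) μ)
    (w₁ w₂ : ℝ) (hle : w₁ ≤ w₂) :
    (∫ ω, X ω * Real.exp (h * min (X ω) w₁) ∂μ) /
        (∫ ω, Real.exp (h * min (X ω) w₁) ∂μ) ≤
      (∫ ω, X ω * Real.exp (h * min (X ω) w₂) ∂μ) /
        (∫ ω, Real.exp (h * min (X ω) w₂) ∂μ) := by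
  have hf w := integrable_exp_mul_min (μ := μ) hX.aemeasurable hh.le w
  have hXf w := integrable_mul_exp_mul_min hX.aemeasurable hint hh w
  rw [div_le_div_iff₀ (integral_exp_pos (hf w₁)) (integral_exp_pos (hf w₂))]
  exact integral_mul_mul_integral_le_of_sub_mul_sub_nonneg (hf w₁) (hf w₂) (hXf w₁) (hXf w₂)
    fun a b => sub_mul_exp_mul_min_sub_nonneg hh.le hle (X a) (X b)
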